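/- Let d ≥ 1, α ∈ (0,1), let V̂ ∈ ℝ^d with |V̂| = 1, let σ₁, σ₂ ∈ ℝ^d satisfy |σ₁|² + |σ₂|² + |σ₁−σ₂|² = 1, and let ξ ∈ [0, α]. Define r = 2√(αξ − ξ²) and μ = (1 − r V̂·(σ₁+σ₂) + ξ(|σ₁+σ₂|² − 1))/3, μ₁ = (1 + r V̂·(2σ₁−σ₂) + ξ(|2σ₁−σ₂|² − 1))/3, μ₂ = (1 + r V̂·(−σ₁+2σ₂) + ξ(|−σ₁+2σ₂|² − 1))/3. Then μ + μ₁ + μ₂ = 1 and μ, μ₁, μ₂ ∈ (0,1); in fact each of μ, μ₁, μ₂ is at least (1−α)/3. -/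
import Mathlib


open scoped RealInnerProductSpace

/-- `μ(ξ) = (1 − r V̂·(σ₁+σ₂) + ξ(|σ₁+σ₂|² − 1))/3` with `r = 2√(αξ − ξ²)`. -/
noncomputable def muZero {d : ℕ} (α ξ : ℝ) (Vh σ₁ σ₂ : EuclideanSpace ℝ (Fin d)) : ℝ :=
  (1 - 2 * Real.sqrt (α * ξ - ξ ^ 2) * ⟪Vh, σ₁ + σ₂⟫ + ξ * (‖σ₁ + σ₂‖ ^ 2 - 1)) / 3

/-- `μ₁(ξ) = (1 + r V̂·(2σ₁−σ₂) + ξ(|2σ₁−σ₂|² − 1))/3` with `r = 2√(αξ − ξ²)`. -/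
noncomputable def muOne {d : ℕ} (α ξ : ℝ) (Vh σ₁ σ₂ : EuclideanSpace ℝ (Fin d)) : ℝ :=
  (1 + 2 * Real.sqrt (α * ξ - ξ ^ 2) * ⟪Vh, (2 : ℝ) • σ₁ - σ₂⟫ +
      ξ * (‖(2 : ℝ) • σ₁ - σ₂‖ ^ 2 - 1)) / 3

/-- `μ₂(ξ) = (1 + r V̂·(−σ₁+2σ₂) + ξ(|−σ₁+2σ₂|² − 1))/3` with `r = 2√(αξ − ξ²)`. -/
noncomputable def muTwo {d : ℕ} (α ξ : ℝ) (Vh σ₁ σ₂ : EuclideanSpace ℝ (Fin d)) : ℝ :=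
  (1 + 2 * Real.sqrt (α * ξ - ξ ^ 2) * ⟪Vh, -σ₁ + (2 : ℝ) • σ₂⟫ +
      ξ * (‖-σ₁ + (2 : ℝ) • σ₂‖ ^ 2 - 1)) / 3


private lemma key_quad (α ξ t c : ℝ) (h0 : 0 ≤ ξ) (h1 : ξ ≤ α) (hc : |c| ≤ t) :
    (1 : ℝ) - α ≤ 1 + 2 * Real.sqrt (α * ξ - ξ ^ 2) * c + ξ * (t ^ 2 - 1) := by
  have hs : Real.sqrt (α * ξ - ξ ^ 2) = Real.sqrt ξ * Real.sqrt (α - ξ) := by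
    rw [show α * ξ - ξ ^ 2 = ξ * (α - ξ) by ring, Real.sqrt_mul h0]
  have hξ := Real.sq_sqrt h0
  have hαξ := Real.sq_sqrt (by linarith : (0:ℝ) ≤ α - ξ)
  have habs := abs_le.mp hc
  rw [hs]
  nlinarith [sq_nonneg (Real.sqrt ξ * t - Real.sqrt (α - ξ)),
    mul_nonneg (mul_nonneg (Real.sqrt_nonneg ξ) (Real.sqrt_nonneg (α - ξ))) (by linarith : (0:ℝ) ≤ t - (-c)),
    Real.sqrt_nonneg ξ, Real.sqrt_nonneg (α - ξ)]

/-- the energy fractions `μ, μ₁, μ₂` sum to `1`, lie in `(0,1)`,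
and are each at least `(1−α)/3`. -/
theorem energy_fractions_properties (d : ℕ) (hd : 1 ≤ d) (α : ℝ) (hα : α ∈ Set.Ioo (0 : ℝ) 1)
    (Vh σ₁ σ₂ : EuclideanSpace ℝ (Fin d)) (hV : ‖Vh‖ = 1)
    (hσ : ‖σ₁‖ ^ 2 + ‖σ₂‖ ^ 2 + ‖σ₁ - σ₂‖ ^ 2 = 1) (ξ : ℝ) (hξ : ξ ∈ Set.Icc 0 α) :
    muZero α ξ Vh σ₁ σ₂ + muOne α ξ Vh σ₁ σ₂ + muTwo α ξ Vh σ₁ σ₂ = 1 ∧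
    (muZero α ξ Vh σ₁ σ₂ ∈ Set.Ioo (0 : ℝ) 1 ∧ muOne α ξ Vh σ₁ σ₂ ∈ Set.Ioo (0 : ℝ) 1 ∧
      muTwo α ξ Vh σ₁ σ₂ ∈ Set.Ioo (0 : ℝ) 1) ∧
    ((1 - α) / 3 ≤ muZero α ξ Vh σ₁ σ₂ ∧ (1 - α) / 3 ≤ muOne α ξ Vh σ₁ σ₂ ∧
      (1 - α) / 3 ≤ muTwo α ξ Vh σ₁ σ₂) := by
  obtain ⟨hα0, hα1⟩ := hα
  obtain ⟨hξ0, hξα⟩ := hξ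
  have e1 : ‖σ₁ + σ₂‖ ^ 2 = ‖σ₁‖ ^ 2 + 2 * ⟪σ₁, σ₂⟫ + ‖σ₂‖ ^ 2 := norm_add_sq_real _ _
  have e4 : ‖σ₁ - σ₂‖ ^ 2 = ‖σ₁‖ ^ 2 - 2 * ⟪σ₁, σ₂⟫ + ‖σ₂‖ ^ 2 := norm_sub_sq_real _ _
  have e2 : ‖(2 : ℝ) • σ₁ - σ₂‖ ^ 2 = 4 * ‖σ₁‖ ^ 2 - 4 * ⟪σ₁, σ₂⟫ + ‖σ₂‖ ^ 2 := by
    rw [norm_sub_sq_real, norm_smul, real_inner_smul_left]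
    simp; ring
  have e3 : ‖-σ₁ + (2 : ℝ) • σ₂‖ ^ 2 = ‖σ₁‖ ^ 2 - 4 * ⟪σ₁, σ₂⟫ + 4 * ‖σ₂‖ ^ 2 := by
    rw [norm_add_sq_real, norm_smul, real_inner_smul_right, inner_neg_left, norm_neg]
    simp; ring
  have i1 : ⟪Vh, σ₁ + σ₂⟫ = ⟪Vh, σ₁⟫ + ⟪Vh, σ₂⟫ := inner_add_right _ _ _
  have i2 : ⟪Vh, (2 : ℝ) • σ₁ - σ₂⟫ = 2 * ⟪Vh, σ₁⟫ - ⟪Vh, σ₂⟫ := by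
    rw [inner_sub_right, real_inner_smul_right]
  have i3 : ⟪Vh, -σ₁ + (2 : ℝ) • σ₂⟫ = -⟪Vh, σ₁⟫ + 2 * ⟪Vh, σ₂⟫ := by
    rw [inner_add_right, real_inner_smul_right, inner_neg_right]
  have hsum : muZero α ξ Vh σ₁ σ₂ + muOne α ξ Vh σ₁ σ₂ + muTwo α ξ Vh σ₁ σ₂ = 1 := by
    unfold muZero muOne muTwo
    rw [e1, e2, e3, i1, i2, i3]
    have := hσ
    rw [e4] at this
    linear_combination ξ * this
  have cs : ∀ w : EuclideanSpace ℝ (Fin d), |⟪Vh, w⟫| ≤ ‖w‖ := fun w => by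
    calc |⟪Vh, w⟫| ≤ ‖Vh‖ * ‖w‖ := abs_real_inner_le_norm _ _
    _ = ‖w‖ := by rw [hV, one_mul]
  have h0 : (1 - α) / 3 ≤ muZero α ξ Vh σ₁ σ₂ := by
    have := key_quad α ξ ‖σ₁ + σ₂‖ (-⟪Vh, σ₁ + σ₂⟫) hξ0 hξα (by rw [abs_neg]; exact cs _)
    unfold muZero; linarith
  have h1 : (1 - α) / 3 ≤ muOne α ξ Vh σ₁ σ₂ := by
    have := key_quad α ξ ‖(2:ℝ) • σ₁ - σ₂‖ ⟪Vh, (2:ℝ) • σ₁ - σ₂⟫ hξ0 hξα (cs _)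
    unfold muOne; linarith
  have h2 : (1 - α) / 3 ≤ muTwo α ξ Vh σ₁ σ₂ := by
    have := key_quad α ξ ‖-σ₁ + (2:ℝ) • σ₂‖ ⟪Vh, -σ₁ + (2:ℝ) • σ₂⟫ hξ0 hξα (cs _)
    unfold muTwo; linarith
  have p0 : 0 < muZero α ξ Vh σ₁ σ₂ := lt_of_lt_of_le (by linarith) h0
  have p1 : 0 < muOne α ξ Vh σ₁ σ₂ := lt_of_lt_of_le (by linarith) h1
  have p2 : 0 < muTwo α ξ Vh σ₁ σ₂ := lt_of_lt_of_le (by linarith) h2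
  exact ⟨hsum, ⟨⟨p0, by linarith⟩, ⟨p1, by linarith⟩, ⟨p2, by linarith⟩⟩, h0, h1, h2⟩
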